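/- Let X be a one-sided shift space with property (**) (i.e., Sp_l(X) is finite, contains no periodic point, and property (*) holds). Suppose ω, ω' are left special elements, {(k_m, l_m)}_{m≥1} ⊆ 𝓘 is a sequence with k_m < k_{m+1} for all m, {k_m} unbounded, and the differences k_{m+1} − k_m pairwise distinct. Suppose integers 0 ≤ n_{(k_m,l_m)} < l_m satisfy P_{l_m}(σ^{n_{(k_m,l_m)}}(ω')) = P_{l_m}(ω_{[k_m, k_{m+1})} σ^{n_{(k_{m+1},l_{m+1})}}(ω')) for all m ≥ 1 (where ω_{[k_m,k_{m+1})} σ^{n}(ω') denotes the concatenation, assumed to lie in X). Then the sequence {n_{(k_m,l_m)}}_{m≥1} is unbounded. -/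
import Mathlib


open Function Set

variable {A : Type*}

/-- The one-sided shift map. -/
def shiftMap (x : ℕ → A) : ℕ → A := fun n => x (n + 1)

/-- Prepend a finite word to a one-sided sequence. -/
def prependWord (μ : List A) (x : ℕ → A) : ℕ → A :=
  fun n => if h : n < μ.length then μ.get ⟨n, h⟩ else x (n - μ.length)

/-- `PastSet X l x` is the set `P_l(x)` of words `μ` of length `l` with `μx ∈ X`. -/
def PastSet (X : Set (ℕ → A)) (l : ℕ) (x : ℕ → A) : Set (List A) :=
  {μ | μ.length = l ∧ prependWord μ x ∈ X}

/-- A point is left special if it has at least two shift-preimages in `X`. -/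
def IsLeftSpecial (X : Set (ℕ → A)) (x : ℕ → A) : Prop :=
  x ∈ X ∧ ∃ y z, y ∈ X ∧ z ∈ X ∧ y ≠ z ∧ shiftMap y = x ∧ shiftMap z = x

/-- The set of left special elements of `X`. -/
def SpL (X : Set (ℕ → A)) : Set (ℕ → A) := {x | IsLeftSpecial X x}

/-- A point is periodic if `σ^n x = x` for some `n ≥ 1`. -/
def IsPer (x : ℕ → A) : Prop := ∃ n ≥ 1, shiftMap^[n] x = x

/-- The language of `X`: finite words occurring as factors of points of `X`. -/
def Lang (X : Set (ℕ → A)) : Set (List A) :=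
  {μ | ∃ x ∈ X, ∃ n : ℕ, ∀ i : Fin μ.length, x (n + i) = μ.get i}

/-- The two-sided shift space associated with `X` (inverse limit identification). -/
def twoSided (X : Set (ℕ → A)) : Set (ℤ → A) :=
  {z | ∀ n : ℤ, (fun i : ℕ => z (n + i)) ∈ X}

/-- Left special elements of a two-sided shift space. -/
def SpLZ (Y : Set (ℤ → A)) : Set (ℤ → A) :=
  {z | z ∈ Y ∧ ∃ z' ∈ Y, z' (-1) ≠ z (-1) ∧ ∀ i : ℕ, z' i = z i}

/-- Right tail equivalence. -/
def Rte (x y : ℕ → A) : Prop := ∃ M M' : ℕ, shiftMap^[M] x = shiftMap^[M'] y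

lemma shift_apply (x : ℕ → A) (n i : ℕ) : shiftMap^[n] x i = x (i + n) := by
  induction n generalizing x i with
  | zero => rfl
  | succ n ih =>
      rw [Function.iterate_succ_apply']
      show (shiftMap^[n] x) (i+1) = x (i + (n+1))
      rw [ih]; congr 1; omega

lemma prepend_nil (x : ℕ → A) : prependWord ([] : List A) x = x := by
  funext n; simp [prependWord]

lemma prepend_cons_zero (a : A) (μ : List A) (x : ℕ → A) :
    prependWord (a :: μ) x 0 = a := by
  simp [prependWord]

lemma prepend_cons_succ (a : A) (μ : List A) (x : ℕ → A) (n : ℕ) :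
    prependWord (a :: μ) x (n + 1) = prependWord μ x n := by
  simp only [prependWord, List.length_cons]
  by_cases h : n < μ.length
  · rw [dif_pos (Nat.succ_lt_succ h), dif_pos h]
    simp [List.get_eq_getElem]
  · rw [dif_neg (by omega), dif_neg h]
    congr 1
    omega

lemma prepend_cons (a : A) (μ : List A) (x : ℕ → A) :
    prependWord (a :: μ) x = prependWord [a] (prependWord μ x) := by
  funext n
  cases n with
  | zero => rw [prepend_cons_zero, prepend_cons_zero]
  | succ n =>
      rw [prepend_cons_succ, prepend_cons_succ, prepend_nil]

lemma shift_prepend (a : A) (μ : List A) (x : ℕ → A) :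
    shiftMap (prependWord (a :: μ) x) = prependWord μ x := by
  funext n
  exact prepend_cons_succ a μ x n

lemma shift_prepend_len (μ : List A) (x : ℕ → A) :
    shiftMap^[μ.length] (prependWord μ x) = x := by
  induction μ with
  | nil => rw [prepend_nil]; rfl
  | cons a μ ih =>
      rw [List.length_cons, Function.iterate_succ_apply, shift_prepend, ih]

lemma prepend_append (μ ν : List A) (x : ℕ → A) :
    prependWord (μ ++ ν) x = prependWord μ (prependWord ν x) := by
  induction μ with
  | nil => rw [List.nil_append, prepend_nil]
  | cons a μ ih =>
      rw [List.cons_append, prepend_cons, ih, ← prepend_cons]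

lemma prepend_range (x : ℕ → A) (n : ℕ) :
    prependWord ((List.range n).map x) (shiftMap^[n] x) = x := by
  funext i
  simp only [prependWord, List.length_map, List.length_range]
  by_cases h : i < n
  · rw [dif_pos h]
    simp [List.get_eq_getElem]
  · rw [dif_neg h, shift_apply]
    congr 1; omega

section

variable {X : Set (ℕ → A)} (hseq : shiftMap '' X = X)

include hseq

lemma mem_shift {x : ℕ → A} (hx : x ∈ X) : shiftMap x ∈ X := by
  rw [← hseq]; exact ⟨x, hx, rfl⟩

lemma mem_shift_iter {x : ℕ → A} (hx : x ∈ X) (n : ℕ) : shiftMap^[n] x ∈ X := by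
  induction n with
  | zero => exact hx
  | succ n ih => rw [Function.iterate_succ_apply']; exact mem_shift hseq ih

lemma exists_extend {u : ℕ → A} (hu : u ∈ X) (t : ℕ) :
    ∃ ν : List A, ν.length = t ∧ prependWord ν u ∈ X := by
  induction t with
  | zero => exact ⟨[], rfl, by rwa [prepend_nil]⟩
  | succ t ih =>
      obtain ⟨ν, hl, hν⟩ := ih
      have : prependWord ν u ∈ shiftMap '' X := by rw [hseq]; exact hν
      obtain ⟨v, hvX, hv⟩ := this
      have hveq : v = prependWord (v 0 :: ν) u := by
        rw [prepend_cons]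
        funext n
        cases n with
        | zero => simp [prependWord]
        | succ n =>
            have : prependWord [v 0] (prependWord ν u) (n+1) = prependWord ν u n := by
              simp [prependWord]
            rw [this, ← hv]; rfl
      exact ⟨v 0 :: ν, by simp [hl], by rw [← hveq]; exact hvX⟩

lemma past_mono {x x' : ℕ → A} {L j : ℕ} (hj : j ≤ L)
    (h : PastSet X L x ⊆ PastSet X L x') : PastSet X j x ⊆ PastSet X j x' := by
  intro μ hμ
  obtain ⟨hlen, hx⟩ := hμ
  obtain ⟨ν, hνl, hν⟩ := exists_extend hseq hx (L - j)
  have h1 : (ν ++ μ) ∈ PastSet X L x := by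
    refine ⟨by simp [hνl, hlen]; omega, ?_⟩
    rwa [prepend_append]
  have h2 := h h1
  have h3 : prependWord ν (prependWord μ x') ∈ X := by
    rw [← prepend_append]; exact h2.2
  have h4 := mem_shift_iter hseq h3 ν.length
  rw [shift_prepend_len] at h4
  exact ⟨hlen, h4⟩

lemma no_ev_per (hper : ∀ x ∈ SpL X, ¬ IsPer x)
    {y : ℕ → A} (hy : y ∈ SpL X) {p a : ℕ} (hp : 1 ≤ p)
    (h : ∀ i, a ≤ i → y (i + p) = y i) : False := by
  classical
  by_cases hall : ∀ i, y (i + p) = y i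
  · apply hper y hy
    exact ⟨p, hp, by funext i; rw [shift_apply]; exact hall i⟩
  · push_neg at hall
    obtain ⟨i1, h1⟩ := hall
    have hi1a : i1 ≤ a := by
      by_contra hc
      exact h1 (h i1 (by omega))
    set P : ℕ → Prop := fun i => y (i + p) ≠ y i with hP
    set i0 := Nat.findGreatest P a with hi0
    have h1' : P i1 := h1
    have hP0 : P i0 := Nat.findGreatest_spec hi1a h1'
    rw [hP] at hP0
    have hgt : ∀ m, i0 < m → y (m + p) = y m := by
      intro m hm
      by_cases hma : m ≤ a
      · by_contra hc
        exact Nat.findGreatest_is_greatest hm hma hc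
      · exact h m (by omega)
    set z := shiftMap^[i0 + 1] y with hz
    have hyX : y ∈ X := hy.1
    have hzper : shiftMap^[p] z = z := by
      funext j
      rw [shift_apply, hz, shift_apply, shift_apply]
      have := hgt (j + (i0 + 1)) (by omega)
      calc y (j + p + (i0 + 1)) = y (j + (i0 + 1) + p) := by congr 1; omega
        _ = y (j + (i0 + 1)) := this
    refine hper z ?_ ⟨p, hp, hzper⟩
    refine ⟨mem_shift_iter hseq hyX _, shiftMap^[i0] y, shiftMap^[i0 + p] y,
      mem_shift_iter hseq hyX _, mem_shift_iter hseq hyX _, ?_, ?_, ?_⟩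
    · intro hc
      apply hP0
      have := congrFun hc 0
      rw [shift_apply, shift_apply] at this
      simpa using this.symm
    · exact (Function.iterate_succ_apply' shiftMap i0 y).symm
    · rw [show shiftMap (shiftMap^[i0 + p] y) = shiftMap^[i0 + p + 1] y from
        (Function.iterate_succ_apply' _ _ _).symm]
      funext j
      rw [shift_apply, hz, shift_apply]
      have := hgt (j + (i0 + 1)) (by omega)
      calc y (j + (i0 + p + 1)) = y (j + (i0 + 1) + p) := by congr 1; omega
        _ = y (j + (i0 + 1)) := this

lemma tails_eq_false (hper : ∀ x ∈ SpL X, ¬ IsPer x)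
    {y : ℕ → A} (hy : y ∈ SpL X) {c c' : ℕ} (hcc : c < c')
    (h : shiftMap^[c] y = shiftMap^[c'] y) : False := by
  refine no_ev_per hseq hper hy (p := c' - c) (a := c) (by omega) ?_
  intro i hi
  have := congrFun h (i - c)
  rw [shift_apply, shift_apply] at this
  have e1 : i - c + c = i := by omega
  have e2 : i - c + c' = i + (c' - c) := by omega
  rw [e1, e2] at this
  exact this.symm

end

/-- under property (**), the sequence `n_{(k_m,l_m)}` in the past-set
compatibility condition is unbounded. -/
theorem stmt10 [Finite A] [TopologicalSpace A] [DiscreteTopology A]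
    (X : Set (ℕ → A)) (hne : X.Nonempty) (hcl : IsClosed X)
    (hseq : shiftMap '' X = X)
    (hstar : ∀ μ ∈ Lang X, ∃ x ∈ X, PastSet X μ.length x = {μ})
    (hfin : (SpL X).Finite) (hper : ∀ x ∈ SpL X, ¬ IsPer x)
    (ω ω' : ℕ → A) (hω : IsLeftSpecial X ω) (hω' : IsLeftSpecial X ω')
    (k l nn : ℕ → ℕ)
    (hkl : ∀ m, 1 ≤ k m ∧ k m ≤ l m)
    (hmono : ∀ m, k m < k (m + 1))
    (hunb : ∀ B : ℕ, ∃ m, B < k m)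
    (hdiff : ∀ m m', m ≠ m' → k (m + 1) - k m ≠ k (m' + 1) - k m')
    (hn : ∀ m, nn m < l m)
    (hmem : ∀ m, prependWord ((List.range (k (m + 1) - k m)).map (fun i => ω (k m + i)))
        (shiftMap^[nn (m + 1)] ω') ∈ X)
    (heq : ∀ m, PastSet X (l m) (shiftMap^[nn m] ω') =
      PastSet X (l m) (prependWord
        ((List.range (k (m + 1) - k m)).map (fun i => ω (k m + i)))
        (shiftMap^[nn (m + 1)] ω'))) :
    ∀ B : ℕ, ∃ m, B < nn m := by
  by_contra hcon
  push_neg at hcon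
  obtain ⟨B, hB⟩ := hcon
  classical
  obtain ⟨hω'X, u, v, huX, hvX, huv, hσu, hσv⟩ := hω'
  have hu' : u = prependWord [u 0] ω' := by
    funext n
    cases n with
    | zero => rw [prepend_cons_zero]
    | succ n => rw [prepend_cons_succ, prepend_nil, ← hσu]; rfl
  have hv' : v = prependWord [v 0] ω' := by
    funext n
    cases n with
    | zero => rw [prepend_cons_zero]
    | succ n => rw [prepend_cons_succ, prepend_nil, ← hσv]; rfl
  have hab : u 0 ≠ v 0 := fun h => huv (by rw [hu', hv', h])
  set Y : ℕ → (ℕ → A) := fun m =>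
    prependWord (((List.range (nn m)).map ω') ++
      (List.range (k (m + 1) - k m)).map (fun i => ω (k m + i)))
      (shiftMap^[nn (m + 1)] ω') with hY
  have key : ∀ (m : ℕ) (c : A), prependWord [c] ω' ∈ X → prependWord [c] (Y m) ∈ X := by
    intro m c hc
    have h1 : prependWord (c :: (List.range (nn m)).map ω') (shiftMap^[nn m] ω')
        = prependWord [c] ω' := by
      rw [prepend_cons, prepend_range]
    have hmemP : (c :: (List.range (nn m)).map ω') ∈
        PastSet X (nn m + 1) (shiftMap^[nn m] ω') := by
      refine ⟨by simp, ?_⟩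
      rw [h1]; exact hc
    have hsub := past_mono hseq (X := X) (L := l m) (j := nn m + 1)
      (by have := hn m; omega) (heq m).subset hmemP
    have h2 := hsub.2
    rw [prepend_cons, ← prepend_append ((List.range (nn m)).map ω') ((List.range (k (m + 1) - k m)).map (fun i => ω (k m + i)))] at h2
    simp only [hY]
    exact h2
  have hYSpL : ∀ m, Y m ∈ SpL X := by
    intro m
    have hU := key m (u 0) (by rw [← hu']; exact huX)
    have hV := key m (v 0) (by rw [← hv']; exact hvX)
    have hσU : shiftMap (prependWord [u 0] (Y m)) = Y m := by
      rw [shift_prepend, prepend_nil]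
    have hσV : shiftMap (prependWord [v 0] (Y m)) = Y m := by
      rw [shift_prepend, prepend_nil]
    have hYX : Y m ∈ X := by rw [← hσU]; exact mem_shift hseq hU
    refine ⟨hYX, _, _, hU, hV, ?_, hσU, hσV⟩
    intro hc
    refine hab ?_
    have := congrFun hc 0
    rwa [prepend_cons_zero, prepend_cons_zero] at this
  haveI := hfin.to_subtype
  obtain ⟨m, m', hmm', hfeq⟩ := Finite.exists_ne_map_eq_of_infinite
    (fun m : ℕ => ((⟨Y m, hYSpL m⟩ : SpL X),
      (⟨nn m, by have := hB m; omega⟩ : Fin (B + 1)),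
      (⟨nn (m + 1), by have := hB (m + 1); omega⟩ : Fin (B + 1))))
  simp only [Prod.mk.injEq, Subtype.mk.injEq, Fin.mk.injEq] at hfeq
  obtain ⟨hYeq, hn1', hn2'⟩ := hfeq
  have S : ∀ j, shiftMap^[nn j + (k (j + 1) - k j)] (Y j) = shiftMap^[nn (j + 1)] ω' := by
    intro j
    have hl : (((List.range (nn j)).map ω') ++
        (List.range (k (j + 1) - k j)).map (fun i => ω (k j + i))).length
        = nn j + (k (j + 1) - k j) := by simp
    simp only [hY]
    rw [← hl]
    exact shift_prepend_len _ _
  have hdne : k (m + 1) - k m ≠ k (m' + 1) - k m' := hdiff m m' hmm'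
  have T1 := S m
  have T2 := S m'
  rw [← hYeq, ← hn1', ← hn2'] at T2
  have Teq : shiftMap^[nn m + (k (m + 1) - k m)] (Y m)
      = shiftMap^[nn m + (k (m' + 1) - k m')] (Y m) := T1.trans T2.symm
  rcases Nat.lt_or_ge (nn m + (k (m + 1) - k m)) (nn m + (k (m' + 1) - k m')) with hlt | hge
  · exact tails_eq_false hseq hper (hYSpL m) hlt Teq
  · have hlt' : nn m + (k (m' + 1) - k m') < nn m + (k (m + 1) - k m) := by omega
    exact tails_eq_false hseq hper (hYSpL m) hlt' Teq.symm
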